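/- With the hypotheses of the Frobenius eigenvalues lemma (g ≥ 3, Galois group (ℤ/2ℤ)^g ⋊ S_g), if λ₁, λ₂, λ₃, λ₄ are four distinct roots of f_v(x) satisfying λ₁λ₂ = λ₃λ₄, then λ₂ is the complex conjugate of λ₁ and λ₄ is the complex conjugate of λ₃ (equivalently λ₁λ₂ = λ₃λ₄ = q). -/

import Mathlib

/-!
A Galois element may change the sign of a single conjugate pair, i.e. swap `μ i` with
`μ (rev i) = q / μ i` and fix every other root; it preserves every polynomial relation over `ℚ`
among the roots. Applied to the pair of `a`, the relation `μ a μ b = μ c μ d` either forces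
`μ (rev a) = μ a`, or (when `c` or `d` is `rev a`) forces two roots from different pairs to be
negatives of each other, which a sign change on one of those pairs rules out. Hence `b = rev a`,
so `μ c μ d = q` and `d = rev c`; finally `|μ i|² = q` identifies `μ (rev i)` with `conj (μ i)`.
-/

open Equiv MvPolynomial

def PreservesRelations {ι K : Type*} [CommRing K] [Algebra ℚ K] (ν ν' : ι → K) : Prop :=
  ∀ P : MvPolynomial ι ℚ, aeval ν P = 0 → aeval ν' P = 0

namespace PreservesRelations

variable {ι K : Type*} [CommRing K] [Algebra ℚ K] {ν ν' : ι → K}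

theorem mul_eq_mul (h : PreservesRelations ν ν') {a b c d : ι}
    (hrel : ν a * ν b = ν c * ν d) : ν' a * ν' b = ν' c * ν' d := by
  have := h (X a * X b - X c * X d) (by simp [hrel])
  simpa [sub_eq_zero] using this

theorem eq_neg (h : PreservesRelations ν ν') {a b : ι} (hrel : ν a = -ν b) : ν' a = -ν' b := by
  have := h (X a + X b) (by simp [hrel])
  simpa [add_eq_zero_iff_eq_neg] using this

end PreservesRelations

theorem Function.Involutive.swap_apply_comm {α : Type*} [DecidableEq α] {r : α → α}
    (hr : Function.Involutive r) (i j : α) :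
    Equiv.swap i (r i) (r j) = r (Equiv.swap i (r i) j) := by
  rw [← hr.injective.swap_apply, hr i, swap_comm]

section PairedRoots

variable {ι K : Type*} [DecidableEq ι] [Field K] [Algebra ℚ K] {r : ι → ι} {ν : ι → K}
  {a b c d : ι}

theorem eq_partner_of_eq_neg (hrb : r b ≠ b) (hinj : Function.Injective ν)
    (hflip : PreservesRelations ν (ν ∘ swap b (r b))) (hbd : b ≠ d) (h : ν b = -ν d) :
    d = r b := by
  by_contra hd
  have h' := hflip.eq_neg h
  simp only [Function.comp_apply, swap_apply_left, swap_apply_of_ne_of_ne hbd.symm hd] at h'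
  exact hrb (hinj (h'.trans h.symm))

theorem eq_neg_of_mul_eq_partner_mul (hinj : Function.Injective ν)
    (hflip : PreservesRelations ν (ν ∘ swap a (r a))) (ha : ν a * ν (r a) ≠ 0)
    (hab : a ≠ b) (had : a ≠ d) (hbd : b ≠ d) (hbr : b ≠ r a) (hdr : d ≠ r a)
    (h : ν a * ν b = ν (r a) * ν d) : ν b = -ν d := by
  have h' := hflip.mul_eq_mul h
  simp only [Function.comp_apply, swap_apply_left, swap_apply_right,
    swap_apply_of_ne_of_ne hab.symm hbr, swap_apply_of_ne_of_ne had.symm hdr] at h'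
  have hsq : ν b ^ 2 = ν d ^ 2 :=
    mul_left_cancel₀ ha (by linear_combination (ν (r a) * ν b) * h + (ν (r a) * ν d) * h')
  exact (sq_eq_sq_iff_eq_or_eq_neg.mp hsq).resolve_left (hinj.ne hbd)

variable {q : K}

theorem not_mul_eq_partner_mul (hr : ∀ i, r i ≠ i) (hinj : Function.Injective ν)
    (hflip : ∀ i, PreservesRelations ν (ν ∘ swap i (r i))) (hpair : ∀ i, ν i * ν (r i) = q)
    (hq : q ≠ 0) (hab : a ≠ b) (had : a ≠ d) (hbd : b ≠ d) (hbr : b ≠ r a) (hdr : d ≠ r a) :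
    ν a * ν b ≠ ν (r a) * ν d := by
  intro h
  have hb : ν b = -ν d :=
    eq_neg_of_mul_eq_partner_mul hinj (hflip a) (hpair a ▸ hq) hab had hbd hbr hdr h
  obtain rfl : d = r b := eq_partner_of_eq_neg (hr b) hinj (hflip b) hbd hb
  have hb0 : ν b ≠ 0 := left_ne_zero_of_mul (hpair b ▸ hq)
  have ha : ν a = -ν (r a) := mul_right_cancel₀ hb0 (by linear_combination h + ν (r a) * hb)
  have hsq : ν a ^ 2 = ν b ^ 2 := by
    linear_combination ν a * ha - hpair a - ν b * hb + hpair b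
  rcases sq_eq_sq_iff_eq_or_eq_neg.mp hsq with hab' | hab'
  · exact hab (hinj hab')
  · exact had (hinj (hab'.trans (neg_eq_iff_eq_neg.mpr hb)))

theorem eq_partner_of_mul_eq_mul (hr : ∀ i, r i ≠ i) (hinj : Function.Injective ν)
    (hflip : ∀ i, PreservesRelations ν (ν ∘ swap i (r i))) (hpair : ∀ i, ν i * ν (r i) = q)
    (hq : q ≠ 0) (hab : a ≠ b) (hac : a ≠ c) (had : a ≠ d) (hbc : b ≠ c) (hbd : b ≠ d)
    (hcd : c ≠ d) (h : ν a * ν b = ν c * ν d) : b = r a := by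
  by_contra hbr
  by_cases hc : c = r a
  · subst hc
    exact not_mul_eq_partner_mul hr hinj hflip hpair hq hab had hbd hbr hcd.symm h
  by_cases hd : d = r a
  · subst hd
    exact not_mul_eq_partner_mul hr hinj hflip hpair hq hab hac hbc hbr hcd
      (h.trans (mul_comm _ _))
  have h' := (hflip a).mul_eq_mul h
  simp only [Function.comp_apply, swap_apply_left, swap_apply_of_ne_of_ne hab.symm hbr,
    swap_apply_of_ne_of_ne hac.symm hc, swap_apply_of_ne_of_ne had.symm hd] at h'
  have hb0 : ν b ≠ 0 := left_ne_zero_of_mul (hpair b ▸ hq)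
  exact hr a (hinj (mul_right_cancel₀ hb0 (h'.trans h.symm)))

theorem eq_partner_and_eq_partner_of_mul_eq_mul (hr : ∀ i, r i ≠ i)
    (hinj : Function.Injective ν) (hflip : ∀ i, PreservesRelations ν (ν ∘ swap i (r i)))
    (hpair : ∀ i, ν i * ν (r i) = q) (hq : q ≠ 0) (hab : a ≠ b) (hac : a ≠ c) (had : a ≠ d)
    (hbc : b ≠ c) (hbd : b ≠ d) (hcd : c ≠ d) (h : ν a * ν b = ν c * ν d) :
    b = r a ∧ d = r c := by
  obtain rfl := eq_partner_of_mul_eq_mul hr hinj hflip hpair hq hab hac had hbc hbd hcd h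
  refine ⟨rfl, hinj (mul_left_cancel₀ (left_ne_zero_of_mul (hpair c ▸ hq)) ?_)⟩
  rw [← h, hpair, hpair]

end PairedRoots

theorem Complex.eq_conj_of_mul_eq_norm_sq {z w : ℂ} (hz : z ≠ 0) (h : z * w = (‖z‖ : ℂ) ^ 2) :
    w = (starRingEnd ℂ) z :=
  mul_left_cancel₀ hz (h.trans (Complex.mul_conj' z).symm)

theorem Fin.rev_ne_self_of_even {n : ℕ} (i : Fin (2 * n)) : Fin.rev i ≠ i := by
  intro h
  have := congrArg Fin.val h
  rw [Fin.val_rev] at this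
  omega

theorem frobenius_eigenvalues_product_pairs_general
    (g : ℕ) (q : ℕ) (hq : IsPrimePow q)
    (μ : Fin (2*g) → ℂ)
    (hinj : Function.Injective μ)
    (habs : ∀ i, ‖μ i‖ = Real.sqrt q)
    (hpair : ∀ i, μ i * μ (Fin.rev i) = (q : ℂ))
    (hgal : ∀ π : Equiv.Perm (Fin (2*g)), (∀ i, π (Fin.rev i) = Fin.rev (π i)) →
      ∀ P : MvPolynomial (Fin (2*g)) ℚ,
        MvPolynomial.aeval μ P = 0 → MvPolynomial.aeval (μ ∘ π) P = 0)
    (a b c d : Fin (2*g)) (hab : a ≠ b) (hac : a ≠ c) (had : a ≠ d)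
    (hbc : b ≠ c) (hbd : b ≠ d) (hcd : c ≠ d)
    (hprod : μ a * μ b = μ c * μ d) :
    μ b = (starRingEnd ℂ) (μ a) ∧ μ d = (starRingEnd ℂ) (μ c) := by
  have hq0 : (q : ℂ) ≠ 0 := Nat.cast_ne_zero.mpr hq.ne_zero
  have hflip (i : Fin (2*g)) : PreservesRelations μ (μ ∘ swap i (Fin.rev i)) :=
    hgal _ (Fin.rev_involutive.swap_apply_comm i)
  obtain ⟨rfl, rfl⟩ := eq_partner_and_eq_partner_of_mul_eq_mul Fin.rev_ne_self_of_even hinj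
    hflip hpair hq0 hab hac had hbc hbd hcd hprod
  have hconj (i : Fin (2*g)) : μ (Fin.rev i) = (starRingEnd ℂ) (μ i) := by
    refine Complex.eq_conj_of_mul_eq_norm_sq (left_ne_zero_of_mul (hpair i ▸ hq0)) ?_
    rw [hpair, habs, ← Complex.ofReal_pow, Real.sq_sqrt q.cast_nonneg,
      Complex.ofReal_natCast]
  exact ⟨hconj a, hconj c⟩

/-- With the hypotheses of the Frobenius-eigenvalues lemma, if four distinct eigenvalues
satisfy `λ₁λ₂ = λ₃λ₄`, then `λ₂` is the complex conjugate of `λ₁` and `λ₄` is the complex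
conjugate of `λ₃`. -/
theorem frobenius_eigenvalues_product_pairs
    (g : ℕ) (hg : 3 ≤ g) (q : ℕ) (hq : IsPrimePow q)
    (μ : Fin (2*g) → ℂ)
    (hinj : Function.Injective μ)
    (halg : ∀ i, IsAlgebraic ℚ (μ i))
    (habs : ∀ i, ‖μ i‖ = Real.sqrt q)
    (hpair : ∀ i, μ i * μ (Fin.rev i) = (q : ℂ))
    (hgal : ∀ π : Equiv.Perm (Fin (2*g)), (∀ i, π (Fin.rev i) = Fin.rev (π i)) →
      ∀ P : MvPolynomial (Fin (2*g)) ℚ,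
        MvPolynomial.aeval μ P = 0 → MvPolynomial.aeval (μ ∘ π) P = 0)
    (a b c d : Fin (2*g)) (hab : a ≠ b) (hac : a ≠ c) (had : a ≠ d)
    (hbc : b ≠ c) (hbd : b ≠ d) (hcd : c ≠ d)
    (hprod : μ a * μ b = μ c * μ d) :
    μ b = (starRingEnd ℂ) (μ a) ∧ μ d = (starRingEnd ℂ) (μ c) :=
  frobenius_eigenvalues_product_pairs_general g q hq μ hinj habs hpair hgal a b c d hab hac had hbc
    hbd hcd hprod
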